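/- arXiv:1105.2603 — 3 statements merged into one kernel-verified Lean document; each statement's English description precedes it below -/
import Mathlib

section
/- Let f, g be complex polynomials in p variables of degrees m and q respectively, and suppose log f is an analytic branch of the logarithm of f on an open set U ⊆ ℂ^p. Then for each multi-index L, the partial derivative ∂_L( g(x) f(x)^{-s} ) equals ∑_{ν=0}^{|L|} (∏_{j=0}^{ν-1}(s+j)) P_{L,ν}(x) f(x)^{-(s+ν)}, where each P_{L,ν} is a polynomial in x independent of s, of degree at most q + mν - |L|, and P_{L,ν} = 0 whenever q + mν - |L| < 0. -/
/-! Write `f^{-s} = exp (-s log f)` and `c ν = ∏_{j<ν} (s + j)`. Since `∂ᵢ log f = ∂ᵢf / f`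
and `c ν * (s + ν) = c (ν + 1)`, the `i`-th partial derivative of `∑ ν, c ν * P ν * f^{-(s+ν)}`
is again of this form, with coefficients `∂ᵢ(P ν) - P (ν - 1) * ∂ᵢf`. Each such derivative
lowers the degree bound `q + m ν - t` by one and raises the top index `t` by one, so induction
on `|L|` gives the claim. -/

open MvPolynomial

/-- Partial derivative in the `i`-th coordinate direction of a function on `ℂ^p`. -/
noncomputable def pderivCoord (p : ℕ) (i : Fin p) (F : (Fin p → ℂ) → ℂ) :
    (Fin p → ℂ) → ℂ :=
  fun x => fderiv ℂ F x (Pi.single i 1)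

/-- The multi-index partial derivative `∂_L = ∂^{|L|}/(∂x_1^{L_1} ⋯ ∂x_p^{L_p})`. -/
noncomputable def pderivMulti (p : ℕ) (L : Fin p → ℕ) (F : (Fin p → ℂ) → ℂ) :
    (Fin p → ℂ) → ℂ :=
  (List.finRange p).foldr (fun i G => (pderivCoord p i)^[L i] G) F

open Filter Topology

theorem MvPolynomial.differentiable_eval {𝕜 σ : Type*} [NontriviallyNormedField 𝕜] [Fintype σ]
    (P : MvPolynomial σ 𝕜) : Differentiable 𝕜 (eval · P) := by
  induction P using MvPolynomial.induction_on with
  | C a => simp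
  | add P Q hP hQ => simp only [map_add]; exact hP.add hQ
  | mul_X P j hP => simp only [map_mul, eval_X]; exact hP.mul (differentiable_apply j)

section Calculus

variable {p : ℕ} {i : Fin p} {F G : (Fin p → ℂ) → ℂ} {x : Fin p → ℂ}

theorem pderivCoord_congr (h : F =ᶠ[𝓝 x] G) : pderivCoord p i F x = pderivCoord p i G x := by
  simp only [pderivCoord, h.fderiv_eq]

theorem pderivCoord_add (hF : DifferentiableAt ℂ F x) (hG : DifferentiableAt ℂ G x) :
    pderivCoord p i (fun y => F y + G y) x = pderivCoord p i F x + pderivCoord p i G x := by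
  simp only [pderivCoord, fderiv_fun_add hF hG, add_apply]

theorem pderivCoord_mul (hF : DifferentiableAt ℂ F x) (hG : DifferentiableAt ℂ G x) :
    pderivCoord p i (fun y => F y * G y) x =
      F x * pderivCoord p i G x + G x * pderivCoord p i F x := by
  simp only [pderivCoord, fderiv_fun_mul hF hG, add_apply,
    smul_apply, smul_eq_mul]

theorem pderivCoord_const_mul (hF : DifferentiableAt ℂ F x) (a : ℂ) :
    pderivCoord p i (fun y => a * F y) x = a * pderivCoord p i F x := by
  simp only [pderivCoord, fderiv_const_mul hF, smul_apply, smul_eq_mul]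

theorem pderivCoord_sum {ι : Type*} (s : Finset ι) {F : ι → (Fin p → ℂ) → ℂ}
    (hF : ∀ k ∈ s, DifferentiableAt ℂ (F k) x) :
    pderivCoord p i (fun y => ∑ k ∈ s, F k y) x = ∑ k ∈ s, pderivCoord p i (F k) x := by
  simp only [pderivCoord, fderiv_fun_sum hF, sum_apply]

theorem pderivCoord_cexp (hF : DifferentiableAt ℂ F x) :
    pderivCoord p i (fun y => Complex.exp (F y)) x = Complex.exp (F x) * pderivCoord p i F x := by
  simp only [pderivCoord, hF.hasFDerivAt.cexp.fderiv, smul_apply, smul_eq_mul]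

theorem pderivCoord_eval (P : MvPolynomial (Fin p) ℂ) :
    pderivCoord p i (eval · P) x = eval x (pderiv i P) := by
  classical
  induction P using MvPolynomial.induction_on with
  | C a => simp [pderivCoord]
  | add P Q hP hQ =>
    simp only [map_add]
    rw [pderivCoord_add (differentiable_eval P x) (differentiable_eval Q x), hP, hQ]
  | mul_X P j hP =>
    have hX : pderivCoord p i (fun y : Fin p → ℂ => y j) x =
        (Pi.single i (1 : ℂ) : Fin p → ℂ) j := by
      simp [pderivCoord, fderiv_apply]
    simp only [map_mul, eval_X, pderiv_X, Derivation.leibniz, smul_eq_mul]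
    rw [pderivCoord_mul (differentiable_eval P x) (differentiable_apply j x), hP, hX,
      Pi.single_apply, Pi.single_apply]
    split_ifs <;> simp [mul_comm]

end Calculus

namespace MvPolynomial

variable {σ R : Type*}

section CommSemiring

variable [CommSemiring R]

-- An integer bound, so that a negative bound forces `P = 0`.
def DegreeLE (P : MvPolynomial σ R) (b : ℤ) : Prop :=
  ∀ d ∈ P.support, (d.degree : ℤ) ≤ b

namespace DegreeLE

variable {P Q : MvPolynomial σ R} {a b : ℤ}

theorem zero (b : ℤ) : DegreeLE (0 : MvPolynomial σ R) b := by
  simp [DegreeLE]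

theorem of_totalDegree_le (h : P.totalDegree ≤ b) : DegreeLE P b :=
  fun _ hd => (Nat.cast_le.mpr (le_totalDegree hd)).trans h

theorem mono (hP : DegreeLE P a) (hab : a ≤ b) : DegreeLE P b :=
  fun d hd => (hP d hd).trans hab

theorem eq_zero_of_neg (hP : DegreeLE P b) (hb : b < 0) : P = 0 := by
  by_contra h
  obtain ⟨d, hd⟩ := support_nonempty.mpr h
  exact absurd (hP d hd) (by omega)

theorem totalDegree_le (hP : DegreeLE P b) (h : P ≠ 0) : (P.totalDegree : ℤ) ≤ b := by
  obtain ⟨d, hd, hsup⟩ := Finset.exists_mem_eq_sup _ (support_nonempty.mpr h)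
    fun d : σ →₀ ℕ => d.sum fun _ e => e
  rw [totalDegree, hsup]
  exact hP d hd

theorem mul (hP : DegreeLE P a) (hQ : DegreeLE Q b) : DegreeLE (P * Q) (a + b) := by
  classical
  intro d hd
  obtain ⟨d₁, hd₁, d₂, hd₂, rfl⟩ := Finset.mem_add.mp (support_mul P Q hd)
  push_cast [map_add]
  exact add_le_add (hP d₁ hd₁) (hQ d₂ hd₂)

theorem pderiv (hP : DegreeLE P b) (i : σ) : DegreeLE (pderiv i P) (b - 1) := by
  classical
  intro d hd
  have hmem : d + Finsupp.single i 1 ∈ P.support := by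
    rw [mem_support_iff, coeff_pderiv] at hd
    exact mem_support_iff.mpr (left_ne_zero_of_mul hd)
  have := hP _ hmem
  push_cast [map_add, Finsupp.degree_single] at this
  omega

end DegreeLE

end CommSemiring

section CommRing

variable [CommRing R]

theorem DegreeLE.sub {P Q : MvPolynomial σ R} {b : ℤ} (hP : DegreeLE P b) (hQ : DegreeLE Q b) :
    DegreeLE (P - Q) b := by
  classical
  intro d hd
  rcases Finset.mem_union.mp (support_sub σ P Q hd) with h | h
  exacts [hP d h, hQ d h]

noncomputable def pderivCoeffs (f : MvPolynomial σ R) (i : σ) (P : ℕ → MvPolynomial σ R) :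
    ℕ → MvPolynomial σ R
  | 0 => pderiv i (P 0)
  | ν + 1 => pderiv i (P (ν + 1)) - P ν * pderiv i f

variable {f : MvPolynomial σ R} {i : σ} {P : ℕ → MvPolynomial σ R}

theorem pderivCoeffs_eq_zero {t : ℕ} (hP : ∀ ν, t < ν → P ν = 0) (ν : ℕ) (hν : t + 1 < ν) :
    pderivCoeffs f i P ν = 0 := by
  obtain ⟨k, rfl⟩ : ∃ k, ν = k + 1 := Nat.exists_eq_add_one.mpr (by omega)
  simp [pderivCoeffs, hP (k + 1) (by omega), hP k (by omega)]

theorem DegreeLE.pderivCoeffs {m c : ℤ} (hf : DegreeLE f m)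
    (hP : ∀ ν : ℕ, DegreeLE (P ν) (c + m * ν)) (ν : ℕ) :
    DegreeLE (pderivCoeffs f i P ν) (c - 1 + m * ν) := by
  cases ν with
  | zero => simpa [MvPolynomial.pderivCoeffs, sub_eq_add_neg, add_comm] using (hP 0).pderiv i
  | succ k =>
    refine ((hP (k + 1)).pderiv i).sub (((hP k).mul (hf.pderiv i)).mono ?_) |>.mono ?_
    all_goals push_cast; linarith

end CommRing

end MvPolynomial

noncomputable def pochhammerExpansion {p : ℕ} (logf : (Fin p → ℂ) → ℂ)
    (P : ℕ → MvPolynomial (Fin p) ℂ) (t : ℕ) (s : ℂ) (x : Fin p → ℂ) : ℂ :=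
  ∑ ν ∈ Finset.range (t + 1),
    (∏ j ∈ Finset.range ν, (s + (j : ℂ))) * eval x (P ν) * Complex.exp (-(s + (ν : ℂ)) * logf x)

section LogBranch

variable {p : ℕ} {U : Set (Fin p → ℂ)} {logf : (Fin p → ℂ) → ℂ} {f : MvPolynomial (Fin p) ℂ}
  {i : Fin p} {x : Fin p → ℂ}

theorem exp_mul_pderivCoord_log (hU : IsOpen U) (hlog : DifferentiableOn ℂ logf U)
    (hexp : ∀ x ∈ U, Complex.exp (logf x) = eval x f) (hx : x ∈ U) :
    Complex.exp (logf x) * pderivCoord p i logf x = eval x (pderiv i f) := by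
  have hfU : (fun y => Complex.exp (logf y)) =ᶠ[𝓝 x] (eval · f) :=
    eventually_of_mem (hU.mem_nhds hx) hexp
  rw [← pderivCoord_cexp ((hlog x hx).differentiableAt (hU.mem_nhds hx)), pderivCoord_congr hfU,
    pderivCoord_eval]

theorem pderivCoord_eval_mul_cexp (hU : IsOpen U) (hlog : DifferentiableOn ℂ logf U)
    (hexp : ∀ x ∈ U, Complex.exp (logf x) = eval x f) (hx : x ∈ U)
    (P : MvPolynomial (Fin p) ℂ) (a : ℂ) :
    pderivCoord p i (fun y => eval y P * Complex.exp (-a * logf y)) x =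
      eval x (pderiv i P) * Complex.exp (-a * logf x)
        - a * eval x (P * pderiv i f) * Complex.exp (-(a + 1) * logf x) := by
  have hlogx := (hlog x hx).differentiableAt (hU.mem_nhds hx)
  have hexp_succ : Complex.exp (-(a + 1) * logf x) * Complex.exp (logf x) =
      Complex.exp (-a * logf x) := by
    rw [← Complex.exp_add]
    congr 1
    ring
  rw [pderivCoord_mul (differentiable_eval P x) (hlogx.const_mul (-a)).cexp,
    pderivCoord_cexp (hlogx.const_mul (-a)), pderivCoord_const_mul hlogx, pderivCoord_eval,
    map_mul, ← exp_mul_pderivCoord_log hU hlog hexp hx, ← hexp_succ]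
  ring

theorem pderivCoord_pochhammerExpansion (hU : IsOpen U) (hlog : DifferentiableOn ℂ logf U)
    (hexp : ∀ x ∈ U, Complex.exp (logf x) = eval x f) (hx : x ∈ U)
    {P : ℕ → MvPolynomial (Fin p) ℂ} {t : ℕ} (hP : P (t + 1) = 0) (s : ℂ) :
    pderivCoord p i (pochhammerExpansion logf P t s) x =
      pochhammerExpansion logf (pderivCoeffs f i P) (t + 1) s x := by
  set c : ℕ → ℂ := fun ν => ∏ j ∈ Finset.range ν, (s + (j : ℂ))
  set E : ℕ → ℂ := fun ν => Complex.exp (-(s + (ν : ℂ)) * logf x)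
  have hlogx := (hlog x hx).differentiableAt (hU.mem_nhds hx)
  have hterm (ν : ℕ) :
      pderivCoord p i (fun y => c ν * eval y (P ν) * Complex.exp (-(s + ν) * logf y)) x =
        c ν * eval x (pderiv i (P ν)) * E ν
          - c (ν + 1) * eval x (P ν * pderiv i f) * E (ν + 1) := by
    simp_rw [mul_assoc (c ν)]
    have hdiff : DifferentiableAt ℂ (fun y => eval y (P ν) * Complex.exp (-(s + ν) * logf y)) x :=
      (differentiable_eval _ x).mul (hlogx.const_mul _).cexp
    rw [pderivCoord_const_mul hdiff, pderivCoord_eval_mul_cexp hU hlog hexp hx]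
    simp only [c, E, Finset.prod_range_succ]
    push_cast
    ring_nf
  have hdiff (ν : ℕ) : DifferentiableAt ℂ
      (fun y => c ν * eval y (P ν) * Complex.exp (-(s + ν) * logf y)) x :=
    ((differentiable_eval _ x).const_mul _).mul (hlogx.const_mul _).cexp
  have hshift : ∑ ν ∈ Finset.range (t + 1), c ν * eval x (pderiv i (P ν)) * E ν =
      ∑ ν ∈ Finset.range (t + 2), c ν * eval x (pderiv i (P ν)) * E ν := by
    simp [Finset.sum_range_succ _ (t + 1), hP]
  unfold pochhammerExpansion
  rw [pderivCoord_sum _ (fun ν _ => hdiff ν), Finset.sum_congr rfl (fun ν _ => hterm ν),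
    Finset.sum_sub_distrib, hshift, Finset.sum_range_succ' _ (t + 1),
    Finset.sum_range_succ' _ (t + 1)]
  simp only [pderivCoeffs, map_sub, sub_mul, mul_sub, Finset.sum_sub_distrib]
  exact (sub_add_eq_add_sub _ _ _).symm

end LogBranch

def HasPochhammerExpansion {p : ℕ} (U : Set (Fin p → ℂ)) (logf : (Fin p → ℂ) → ℂ) (m c : ℤ)
    (t : ℕ) (F : ℂ → (Fin p → ℂ) → ℂ) : Prop :=
  ∃ P : ℕ → MvPolynomial (Fin p) ℂ, (∀ ν, t < ν → P ν = 0) ∧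
    (∀ ν : ℕ, (P ν).DegreeLE (c + m * ν)) ∧ ∀ s, ∀ x ∈ U, F s x = pochhammerExpansion logf P t s x

section Induction

variable {p : ℕ} {U : Set (Fin p → ℂ)} {logf : (Fin p → ℂ) → ℂ} {f : MvPolynomial (Fin p) ℂ}
  {m c : ℤ} {t : ℕ} {F : ℂ → (Fin p → ℂ) → ℂ}

theorem HasPochhammerExpansion.pderivCoord (hU : IsOpen U) (hlog : DifferentiableOn ℂ logf U)
    (hexp : ∀ x ∈ U, Complex.exp (logf x) = eval x f) (hf : f.DegreeLE m)
    (h : HasPochhammerExpansion U logf m c t F) (i : Fin p) :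
    HasPochhammerExpansion U logf m (c - 1) (t + 1) (fun s => pderivCoord p i (F s)) := by
  obtain ⟨P, hP, hdeg, hF⟩ := h
  refine ⟨pderivCoeffs f i P, pderivCoeffs_eq_zero hP, hf.pderivCoeffs hdeg, fun s x hx => ?_⟩
  dsimp only
  rw [pderivCoord_congr (eventually_of_mem (hU.mem_nhds hx) (hF s)),
    pderivCoord_pochhammerExpansion hU hlog hexp hx (hP _ (lt_add_one t))]

theorem HasPochhammerExpansion.iterate_pderivCoord (hU : IsOpen U)
    (hlog : DifferentiableOn ℂ logf U)
    (hexp : ∀ x ∈ U, Complex.exp (logf x) = eval x f) (hf : f.DegreeLE m)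
    (h : HasPochhammerExpansion U logf m c t F) (i : Fin p) (k : ℕ) :
    HasPochhammerExpansion U logf m (c - k) (t + k)
      (fun s => (_root_.pderivCoord p i)^[k] (F s)) := by
  induction k with
  | zero => simpa using h
  | succ k ih =>
    simpa [Function.iterate_succ_apply', sub_sub, add_assoc] using
      ih.pderivCoord hU hlog hexp hf i

theorem HasPochhammerExpansion.pderivMulti (hU : IsOpen U) (hlog : DifferentiableOn ℂ logf U)
    (hexp : ∀ x ∈ U, Complex.exp (logf x) = eval x f) (hf : f.DegreeLE m)
    (h : HasPochhammerExpansion U logf m c t F) (L : Fin p → ℕ) :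
    HasPochhammerExpansion U logf m (c - ∑ i, L i) (t + ∑ i, L i)
      (fun s => _root_.pderivMulti p L (F s)) := by
  suffices ∀ l : List (Fin p), HasPochhammerExpansion U logf m (c - (l.map L).sum)
      (t + (l.map L).sum)
      (fun s => l.foldr (fun i G => (_root_.pderivCoord p i)^[L i] G) (F s)) by
    simpa [Fin.sum_univ_def, _root_.pderivMulti] using this (List.finRange p)
  intro l
  induction l with
  | nil => simpa using h
  | cons i l ih =>
    simpa [sub_sub, add_assoc, add_comm (L i)] using
      ih.iterate_pderivCoord hU hlog hexp hf i (L i)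

end Induction

theorem hasPochhammerExpansion_eval_mul_cexp {p : ℕ} (U : Set (Fin p → ℂ))
    (logf : (Fin p → ℂ) → ℂ) (m : ℤ) {g : MvPolynomial (Fin p) ℂ} {q : ℤ} (hg : g.DegreeLE q) :
    HasPochhammerExpansion U logf m q 0 (fun s y => eval y g * Complex.exp (-s * logf y)) := by
  refine ⟨Pi.single 0 g, fun ν hν => by simp [hν.ne'], fun ν => ?_, fun s x _ => ?_⟩
  · rcases eq_or_ne ν 0 with rfl | hν
    · simpa using hg
    · simpa [Pi.single_eq_of_ne hν] using DegreeLE.zero _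
  · simp [pochhammerExpansion]

/-- `∂_L (g(x) f(x)^{-s}) = ∑_{ν=0}^{|L|} (∏_{j<ν}(s+j)) P_{L,ν}(x) f(x)^{-(s+ν)}`
with `P_{L,ν}` a polynomial independent of `s` of degree at most `q + mν − |L|`, vanishing
when `q + mν − |L| < 0`. -/
theorem stmt7 (p m q : ℕ) (f g : MvPolynomial (Fin p) ℂ)
    (hf : f.totalDegree = m) (hg : g.totalDegree = q)
    (U : Set (Fin p → ℂ)) (hU : IsOpen U)
    (logf : (Fin p → ℂ) → ℂ) (hlog : AnalyticOnNhd ℂ logf U)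
    (hexp : ∀ x ∈ U, Complex.exp (logf x) = MvPolynomial.eval x f)
    (L : Fin p → ℕ) :
    ∃ P : ℕ → MvPolynomial (Fin p) ℂ,
      (∀ ν : ℕ, ((q : ℤ) + m * ν - ∑ i, L i < 0) → P ν = 0) ∧
      (∀ ν : ℕ, P ν = 0 ∨ ((P ν).totalDegree : ℤ) ≤ (q : ℤ) + m * ν - ∑ i, L i) ∧
      ∀ (s : ℂ), ∀ x ∈ U,
        pderivMulti p L (fun y => MvPolynomial.eval y g * Complex.exp (-s * logf y)) x
          = ∑ ν ∈ Finset.range ((∑ i, L i) + 1),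
              (∏ j ∈ Finset.range ν, (s + (j : ℂ))) * MvPolynomial.eval x (P ν)
                * Complex.exp (-(s + (ν : ℂ)) * logf x) := by
  have hfm : f.DegreeLE m := DegreeLE.of_totalDegree_le (by rw [hf])
  have hgq : g.DegreeLE q := DegreeLE.of_totalDegree_le (by rw [hg])
  obtain ⟨P, -, hdeg, hP⟩ := (hasPochhammerExpansion_eval_mul_cexp U logf m hgq).pderivMulti
    hU hlog.differentiableOn hexp hfm L
  have hdeg' (ν : ℕ) : (P ν).DegreeLE ((q : ℤ) + m * ν - ∑ i, L i) :=
    (hdeg ν).mono (by push_cast; linarith)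
  refine ⟨P, fun ν hν => (hdeg' ν).eq_zero_of_neg hν,
    fun ν => or_iff_not_imp_left.mpr (hdeg' ν).totalDegree_le, fun s x hx => ?_⟩
  simpa [pochhammerExpansion] using hP s x hx
end

section
/- Let f satisfy Mahler's Hypothesis and g be a polynomial, both in p variables, with deg f = m and deg g = q. Then the Dirichlet series ζ(s;f,g) = ∑_{k∈ℕ₀^p} g(k) f(k)^{-s} converges absolutely for Re(s) > (q+p)/m. -/
open MvPolynomial

/-- Mahler's Hypothesis: `f` is non-constant, nonvanishing on `[0,∞)^p`, and its top-degree
homogeneous part is nonvanishing on `[0,∞)^p \ {0}`. -/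
def MahlerHyp {p : ℕ} (f : MvPolynomial (Fin p) ℂ) : Prop :=
  0 < f.totalDegree ∧
  (∀ x : Fin p → ℝ, (∀ i, 0 ≤ x i) →
    MvPolynomial.eval (fun i => (x i : ℂ)) f ≠ 0) ∧
  (∀ x : Fin p → ℝ, (∀ i, 0 ≤ x i) → x ≠ 0 →
    MvPolynomial.eval (fun i => (x i : ℂ))
      (MvPolynomial.homogeneousComponent f.totalDegree f) ≠ 0)

/-!
Polynomial growth gives `|g(x)| ≤ C (1 + ‖x‖)^q`. On the orthant, `f` is dominated far from the
origin by its top form, which is bounded below by `c ‖x‖^m` (homogeneity and compactness of the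
positive part of the unit sphere); near the origin `f` is bounded away from `0` by compactness.
Hence `|f(x)| ≥ c (1 + ‖x‖)^m`. The same domination puts `f(tx) / f_top(tx)` in the right
half-plane along each ray, so the continuous branch `log f` has imaginary part within `π` of its
values on a compact ball, hence bounded, and `|f(k)^{-s}| ≤ |f(k)|^{-Re s} e^{|Im s| B}`.
Finally `∑ (1 + ‖k‖)^{-(m Re s - q)}` over `ℕ^p` converges for `m Re s - q > p`, by comparison
with a product of `p` one-dimensional `p`-series.
-/

open Real

noncomputable def evalReal {σ : Type*} (P : MvPolynomial σ ℂ) (x : σ → ℝ) : ℂ :=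
  eval (fun i => (x i : ℂ)) P

section evalReal

variable {σ : Type*}

theorem continuous_evalReal (P : MvPolynomial σ ℂ) : Continuous (evalReal P) :=
  P.continuous_eval.comp (by fun_prop)

theorem evalReal_sub (P Q : MvPolynomial σ ℂ) (x : σ → ℝ) :
    evalReal (P - Q) x = evalReal P x - evalReal Q x :=
  map_sub _ P Q

theorem MvPolynomial.IsHomogeneous.eval_smul {R : Type*} [CommSemiring R] {P : MvPolynomial σ R}
    {n : ℕ} (hP : P.IsHomogeneous n) (c : R) (x : σ → R) :
    eval (c • x) P = c ^ n * eval x P := by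
  simp only [eval_eq, Finset.mul_sum, Pi.smul_apply, smul_eq_mul, mul_pow,
    Finset.prod_mul_distrib, Finset.prod_pow_eq_pow_sum]
  refine Finset.sum_congr rfl fun d hd => ?_
  rw [← hP.degree_eq_sum_deg_support hd]
  ring

theorem MvPolynomial.IsHomogeneous.evalReal_smul {P : MvPolynomial σ ℂ} {n : ℕ}
    (hP : P.IsHomogeneous n) (r : ℝ) (x : σ → ℝ) :
    evalReal P (r • x) = r ^ n * evalReal P x := by
  have hx : (fun i => ((r • x) i : ℂ)) = (r : ℂ) • fun i => (x i : ℂ) := by ext i; simp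
  rw [evalReal, evalReal, hx, hP.eval_smul]

theorem MvPolynomial.totalDegree_sub_homogeneousComponent_le {R : Type*} [CommRing R]
    (P : MvPolynomial σ R) :
    (P - homogeneousComponent P.totalDegree P).totalDegree ≤ P.totalDegree - 1 := by
  have hsum := sum_homogeneousComponent P
  rw [Finset.sum_range_succ] at hsum
  rw [← eq_sub_of_add_eq hsum]
  refine (totalDegree_finsetSum _ _).trans (Finset.sup_le fun d hd => ?_)
  have := Finset.mem_range.mp hd
  exact (homogeneousComponent_isHomogeneous d P).totalDegree_le.trans (by omega)

variable [Fintype σ]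

theorem exists_norm_evalReal_le {P : MvPolynomial σ ℂ} {n : ℕ} (hn : P.totalDegree ≤ n) :
    ∃ C ≥ 0, ∀ x, ‖evalReal P x‖ ≤ C * (1 + ‖x‖) ^ n := by
  refine ⟨∑ d ∈ P.support, ‖P.coeff d‖, by positivity, fun x => ?_⟩
  have hx : ∀ i, ‖(x i : ℂ)‖ ≤ 1 + ‖x‖ := fun i => by
    rw [Complex.norm_real]
    linarith [norm_le_pi_norm x i]
  rw [evalReal, eval_eq', Finset.sum_mul]
  refine (norm_sum_le _ _).trans (Finset.sum_le_sum fun d hd => ?_)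
  rw [norm_mul, norm_prod]
  gcongr
  calc ∏ i, ‖(x i : ℂ) ^ d i‖ ≤ ∏ i, (1 + ‖x‖) ^ d i := by
        gcongr with i; rw [norm_pow]; exact pow_le_pow_left₀ (norm_nonneg _) (hx i) _
    _ = (1 + ‖x‖) ^ ∑ i, d i := Finset.prod_pow_eq_pow_sum _ _ _
    _ ≤ (1 + ‖x‖) ^ n := by
        refine pow_le_pow_right₀ (by linarith [norm_nonneg x]) (le_trans ?_ hn)
        simpa [Finsupp.sum_fintype] using le_totalDegree hd

theorem MvPolynomial.IsHomogeneous.exists_mul_norm_pow_le_norm_evalReal {P : MvPolynomial σ ℂ}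
    {n : ℕ} (hP : P.IsHomogeneous n)
    (hne : ∀ x ∈ Set.Ici (0 : σ → ℝ), x ≠ 0 → evalReal P x ≠ 0) :
    ∃ c > 0, ∀ x ∈ Set.Ici (0 : σ → ℝ), x ≠ 0 → c * ‖x‖ ^ n ≤ ‖evalReal P x‖ := by
  have hK : IsCompact (Set.Ici (0 : σ → ℝ) ∩ Metric.sphere 0 1) :=
    (isCompact_sphere 0 1).inter_left isClosed_Ici
  obtain ⟨c, hc, hcK⟩ := hK.exists_forall_le' (continuous_evalReal P).norm.continuousOn
    fun u hu => norm_pos_iff.mpr (hne u hu.1 (ne_zero_of_mem_unit_sphere ⟨u, hu.2⟩))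
  refine ⟨c, hc, fun x hx hx0 => ?_⟩
  have hnx : 0 < ‖x‖ := norm_pos_iff.mpr hx0
  have hu : ‖x‖⁻¹ • x ∈ Set.Ici (0 : σ → ℝ) ∩ Metric.sphere 0 1 :=
    ⟨Set.mem_Ici.mpr (smul_nonneg (inv_nonneg.mpr hnx.le) hx), by simp [norm_smul, hnx.ne']⟩
  calc c * ‖x‖ ^ n ≤ ‖evalReal P (‖x‖⁻¹ • x)‖ * ‖x‖ ^ n := by gcongr; exact hcK _ hu
    _ = ‖evalReal P x‖ := by
        rw [hP.evalReal_smul, norm_mul, norm_pow, Complex.norm_real, norm_inv, norm_norm,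
          inv_pow]
        field_simp

end evalReal

theorem IsPreconnected.abs_im_sub_im_le_pi {X : Type*} [TopologicalSpace X] {S : Set X}
    (hS : IsPreconnected S) {φ : X → ℂ} (hφ : ContinuousOn φ S)
    (hre : ∀ x ∈ S, 0 < (Complex.exp (φ x)).re) {x y : X} (hx : x ∈ S) (hy : y ∈ S) :
    |(φ x).im - (φ y).im| ≤ π := by
  set G : X → ℂ := fun z => φ z - Complex.log (Complex.exp (φ z))
  -- `G` is continuous with values in the discrete group `2πiℤ`, hence constant on `S`
  have hG : ContinuousOn G S := hφ.sub <| (Complex.continuous_exp.comp_continuousOn hφ).clog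
    fun z hz => Complex.mem_slitPlane_iff.mpr (Or.inl (hre z hz))
  have hGmem : Set.MapsTo G S (AddSubgroup.zmultiples (2 * π * Complex.I)) := fun z _ => by
    have h1 : Complex.exp (G z) = 1 := by
      simp only [G, Complex.exp_sub, Complex.exp_log (Complex.exp_ne_zero _),
        div_self (Complex.exp_ne_zero _)]
    obtain ⟨n, hn⟩ := Complex.exp_eq_one_iff.mp h1
    exact ⟨n, by simp [hn]⟩
  have hGxy : G x = G y := hS.constant_of_mapsTo
    (isDiscrete_iff_discreteTopology.mpr (NormedSpace.discreteTopology_zmultiples _)) hG hGmem hx hy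
  have him : ∀ z, (φ z).im = (G z).im + Complex.arg (Complex.exp (φ z)) := fun z => by
    simp [G, Complex.log_im]
  have harg : ∀ z ∈ S, |Complex.arg (Complex.exp (φ z))| ≤ π / 2 := fun z hz =>
    Complex.abs_arg_le_pi_div_two_iff.mpr (hre z hz).le
  rw [him x, him y, hGxy, add_sub_add_left_eq_sub]
  have hx' := abs_le.mp (harg x hx)
  have hy' := abs_le.mp (harg y hy)
  exact abs_le.mpr ⟨by linarith, by linarith⟩

theorem Complex.re_div_pos_of_norm_sub_lt {z w : ℂ} (h : ‖z - w‖ < ‖w‖) : 0 < (z / w).re := by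
  have hw : w ≠ 0 := by
    rintro rfl
    simp only [sub_zero, norm_zero] at h
    exact (norm_nonneg z).not_gt h
  have h1 : ‖z / w - 1‖ < 1 := by
    rwa [← div_self hw, ← sub_div, norm_div, div_lt_one (norm_pos_iff.mpr hw)]
  have h2 := (abs_lt.mp ((Complex.abs_re_le_norm _).trans_lt h1)).1
  rw [Complex.sub_re, Complex.one_re] at h2
  linarith

theorem MvPolynomial.IsHomogeneous.abs_im_sub_im_smul_le_pi {σ : Type*} {F P : MvPolynomial σ ℂ}
    {n : ℕ} (hP : P.IsHomogeneous n) {logF : (σ → ℝ) → ℂ} (hcont : ContinuousOn logF (Set.Ici 0))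
    (hexp : ∀ x ∈ Set.Ici (0 : σ → ℝ), Complex.exp (logF x) = evalReal F x)
    {x : σ → ℝ} (hx : x ∈ Set.Ici 0) {a : ℝ} (ha : 0 < a) (ha1 : a ≤ 1)
    (hre : ∀ t ∈ Set.Icc a 1, 0 < (evalReal F (t • x) / evalReal P (t • x)).re) :
    |(logF x).im - (logF (a • x)).im| ≤ π := by
  have hPx : evalReal P x ≠ 0 := fun h => by
    simpa [h] using hre 1 ⟨ha1, le_rfl⟩
  have hmem : ∀ t ∈ Set.Icc a 1, t • x ∈ Set.Ici 0 := fun t ht =>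
    Set.mem_Ici.mpr (smul_nonneg (ha.le.trans ht.1) hx)
  -- on the segment, `P (t • x) = t ^ n * P x` has the continuous logarithm `log (P x) + n log t`
  set φ : ℝ → ℂ := fun t => logF (t • x) - (Complex.log (evalReal P x) + n * Real.log t)
  have hφ : ContinuousOn φ (Set.Icc a 1) := by
    refine (hcont.comp (continuous_id.smul continuous_const).continuousOn hmem).sub
      (continuousOn_const.add (continuousOn_const.mul
        (Complex.continuous_ofReal.comp_continuousOn ?_)))
    exact Real.continuousOn_log.mono fun t ht => (ha.trans_le ht.1).ne'
  have hexpφ : ∀ t ∈ Set.Icc a 1, Complex.exp (φ t) = evalReal F (t • x) / evalReal P (t • x) :=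
    fun t ht => by
      rw [hP.evalReal_smul, Complex.exp_sub, Complex.exp_add, hexp _ (hmem t ht),
        Complex.exp_log hPx, ← Complex.ofReal_natCast, ← Complex.ofReal_mul,
        ← Complex.ofReal_exp, Real.exp_nat_mul, Real.exp_log (ha.trans_le ht.1), mul_comm,
        Complex.ofReal_pow]
  have him : ∀ t, (φ t).im = (logF (t • x)).im - (Complex.log (evalReal P x)).im := fun t => by
    simp [φ, ← Complex.ofReal_natCast, ← Complex.ofReal_mul]
  have h := isPreconnected_Icc.abs_im_sub_im_le_pi hφ (fun t ht => hexpφ t ht ▸ hre t ht)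
    (Set.right_mem_Icc.mpr ha1) (Set.left_mem_Icc.mpr ha1)
  rwa [him, him, sub_sub_sub_cancel_right, one_smul] at h

namespace MahlerHyp

variable {p : ℕ} {f : MvPolynomial (Fin p) ℂ}

theorem exists_mul_norm_pow_le_norm_evalReal_top (hf : MahlerHyp f) :
    ∃ c > 0, ∀ x ∈ Set.Ici (0 : Fin p → ℝ), x ≠ 0 →
      c * ‖x‖ ^ f.totalDegree ≤ ‖evalReal (homogeneousComponent f.totalDegree f) x‖ :=
  (homogeneousComponent_isHomogeneous _ f).exists_mul_norm_pow_le_norm_evalReal hf.2.2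

theorem exists_norm_sub_top_le_half (hf : MahlerHyp f) :
    ∃ T ≥ 1, ∀ x ∈ Set.Ici (0 : Fin p → ℝ), T ≤ ‖x‖ →
      ‖evalReal f x - evalReal (homogeneousComponent f.totalDegree f) x‖ ≤
        ‖evalReal (homogeneousComponent f.totalDegree f) x‖ / 2 := by
  obtain ⟨k, hk⟩ := Nat.exists_eq_add_one_of_ne_zero hf.1.ne'
  obtain ⟨c, hc, hlow⟩ := hf.exists_mul_norm_pow_le_norm_evalReal_top
  obtain ⟨C, hC0, hC⟩ := exists_norm_evalReal_le (totalDegree_sub_homogeneousComponent_le f)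
  set m := f.totalDegree
  refine ⟨max 1 (2 ^ m * C / c), le_max_left _ _, fun x hx hT => ?_⟩
  have hx1 : 1 ≤ ‖x‖ := (le_max_left _ _).trans hT
  have hxC : 2 ^ m * C ≤ c * ‖x‖ := by
    have := (le_max_right _ _).trans hT
    rw [div_le_iff₀ hc] at this
    linarith
  rw [← evalReal_sub]
  calc ‖evalReal (f - homogeneousComponent m f) x‖ ≤ C * (1 + ‖x‖) ^ k := by
        simpa only [hk, add_tsub_cancel_right] using hC x
    _ ≤ C * (2 * ‖x‖) ^ k := by gcongr; linarith
    _ = 2 ^ m * C * ‖x‖ ^ k / 2 := by rw [hk]; ring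
    _ ≤ c * ‖x‖ * ‖x‖ ^ k / 2 := by gcongr
    _ = c * ‖x‖ ^ m / 2 := by rw [hk]; ring
    _ ≤ _ := by gcongr; exact hlow x hx (norm_pos_iff.mp (by linarith))

theorem exists_mul_one_add_norm_pow_le (hf : MahlerHyp f) :
    ∃ c > 0, ∀ x ∈ Set.Ici (0 : Fin p → ℝ), c * (1 + ‖x‖) ^ f.totalDegree ≤ ‖evalReal f x‖ := by
  obtain ⟨T, hT, hfar⟩ := hf.exists_norm_sub_top_le_half
  obtain ⟨c₀, hc₀, hlow⟩ := hf.exists_mul_norm_pow_le_norm_evalReal_top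
  set m := f.totalDegree
  have hQ : IsCompact (Set.Ici (0 : Fin p → ℝ) ∩ Metric.closedBall 0 T) :=
    (isCompact_closedBall 0 T).inter_left isClosed_Ici
  obtain ⟨c₁, hc₁, hnear⟩ := hQ.exists_forall_le' (continuous_evalReal f).norm.continuousOn
    fun x hx => norm_pos_iff.mpr (hf.2.1 x hx.1)
  refine ⟨min (c₁ / (1 + T) ^ m) (c₀ / 2 ^ m / 2), by positivity, fun x hx => ?_⟩
  rcases le_or_gt ‖x‖ T with hxT | hTx
  · calc min (c₁ / (1 + T) ^ m) (c₀ / 2 ^ m / 2) * (1 + ‖x‖) ^ m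
        ≤ c₁ / (1 + T) ^ m * (1 + T) ^ m := by gcongr; exact min_le_left _ _
      _ = c₁ := by field_simp
      _ ≤ ‖evalReal f x‖ := hnear x ⟨hx, mem_closedBall_zero_iff.mpr hxT⟩
  · have hdiff := hfar x hx hTx.le
    have htri := norm_sub_norm_le (evalReal (homogeneousComponent m f) x) (evalReal f x)
    rw [norm_sub_rev] at htri
    calc min (c₁ / (1 + T) ^ m) (c₀ / 2 ^ m / 2) * (1 + ‖x‖) ^ m
        ≤ c₀ / 2 ^ m / 2 * (2 * ‖x‖) ^ m := by gcongr; exact min_le_right _ _; linarith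
      _ = c₀ * ‖x‖ ^ m / 2 := by rw [mul_pow]; field_simp
      _ ≤ ‖evalReal (homogeneousComponent m f) x‖ / 2 := by
          gcongr; exact hlow x hx (norm_pos_iff.mp (by linarith))
      _ ≤ ‖evalReal f x‖ := by linarith

theorem exists_abs_im_le (hf : MahlerHyp f) {logf : (Fin p → ℝ) → ℂ}
    (hcont : ContinuousOn logf (Set.Ici 0))
    (hexp : ∀ x ∈ Set.Ici (0 : Fin p → ℝ), Complex.exp (logf x) = evalReal f x) :
    ∃ B, ∀ x ∈ Set.Ici (0 : Fin p → ℝ), |(logf x).im| ≤ B := by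
  obtain ⟨T, hT, hfar⟩ := hf.exists_norm_sub_top_le_half
  have hQ : IsCompact (Set.Ici (0 : Fin p → ℝ) ∩ Metric.closedBall 0 T) :=
    (isCompact_closedBall 0 T).inter_left isClosed_Ici
  obtain ⟨B, hB⟩ := hQ.exists_bound_of_continuousOn (hcont.mono Set.inter_subset_left)
  have hnear : ∀ x ∈ Set.Ici 0, ‖x‖ ≤ T → |(logf x).im| ≤ B := fun x hx hxT =>
    (Complex.abs_im_le_norm _).trans (hB x ⟨hx, mem_closedBall_zero_iff.mpr hxT⟩)
  refine ⟨B + π, fun x hx => ?_⟩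
  rcases le_or_gt ‖x‖ T with hxT | hTx
  · linarith [hnear x hx hxT, pi_pos]
  have hx0 : 0 < ‖x‖ := by linarith
  set a := T / ‖x‖
  have ha : 0 < a := by positivity
  have hmem : ∀ t : ℝ, 0 ≤ t → t • x ∈ Set.Ici 0 := fun t ht =>
    Set.mem_Ici.mpr (smul_nonneg ht hx)
  have hnorm : ∀ t ∈ Set.Icc a 1, T ≤ ‖t • x‖ := fun t ht => by
    rw [norm_smul, Real.norm_of_nonneg (ha.le.trans ht.1)]
    calc T = a * ‖x‖ := (div_mul_cancel₀ T hx0.ne').symm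
      _ ≤ t * ‖x‖ := by gcongr; exact ht.1
  have hsegment := (homogeneousComponent_isHomogeneous f.totalDegree f).abs_im_sub_im_smul_le_pi
    hcont hexp hx ha ((div_le_one hx0).mpr hTx.le) fun t ht =>
      Complex.re_div_pos_of_norm_sub_lt ((hfar _ (hmem t (ha.le.trans ht.1)) (hnorm t ht)).trans_lt
        (half_lt_self (norm_pos_iff.mpr (hf.2.2 _ (hmem t (ha.le.trans ht.1))
          (norm_pos_iff.mp (by linarith [hnorm t ht]))))))
  have hax := hnear (a • x) (hmem a ha.le)
    (by rw [norm_smul, Real.norm_of_nonneg ha.le, div_mul_cancel₀ T hx0.ne'])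
  have := abs_le.mp hsegment
  have := abs_le.mp hax
  exact abs_le.mpr ⟨by linarith, by linarith⟩

end MahlerHyp

theorem summable_fin_pi_prod_of_nonneg {a : ℕ → ℝ} (ha0 : ∀ n, 0 ≤ a n) (ha : Summable a)
    (p : ℕ) : Summable fun k : Fin p → ℕ => ∏ i, a (k i) := by
  induction p with
  | zero => exact .of_finite
  | succ n ih =>
    rw [← (Fin.consEquiv fun _ : Fin (n + 1) => ℕ).summable_iff]
    refine (ha.mul_of_nonneg ih ha0 fun k => Finset.prod_nonneg fun i _ => ha0 _).congr
      fun k => ?_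
    simp [Fin.prod_univ_succ]

theorem summable_one_add_norm_rpow_neg {p : ℕ} {r : ℝ} (hr : (p : ℝ) < r) :
    Summable fun k : Fin p → ℕ => (1 + ‖fun i => (k i : ℝ)‖) ^ (-r) := by
  rcases Nat.eq_zero_or_pos p with rfl | hp
  · exact .of_finite
  have hp' : (0 : ℝ) < p := by exact_mod_cast hp
  have hs : Summable fun n : ℕ => (1 + (n : ℝ)) ^ (-(r / p)) := by
    have h1 : -(r / p) < -1 := by
      rw [neg_lt_neg_iff, one_lt_div hp']
      exact hr
    refine ((summable_nat_add_iff 1).mpr (Real.summable_nat_rpow.mpr h1)).congr fun n => ?_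
    push_cast
    ring_nf
  refine .of_nonneg_of_le (fun _ => by positivity) (fun k => ?_)
    (summable_fin_pi_prod_of_nonneg (fun _ => by positivity) hs p)
  calc (1 + ‖fun i => (k i : ℝ)‖) ^ (-r)
      = ∏ _i : Fin p, (1 + ‖fun i => (k i : ℝ)‖) ^ (-(r / p)) := by
        rw [Finset.prod_const, Finset.card_univ, Fintype.card_fin, ← Real.rpow_natCast,
          ← Real.rpow_mul (by positivity)]
        field_simp
    _ ≤ ∏ i, (1 + (k i : ℝ)) ^ (-(r / p)) := by
        refine Finset.prod_le_prod (fun _ _ => by positivity) fun i _ =>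
          Real.rpow_le_rpow_of_nonpos (by positivity) ?_
            (neg_nonpos.mpr (div_nonneg (hp'.le.trans hr.le) hp'.le))
        simpa using norm_le_pi_norm (fun i => (k i : ℝ)) i

theorem norm_mul_exp_neg_mul_le {a L s : ℂ} {t C c B : ℝ} {q m : ℕ} (ht : 0 ≤ t) (hc : 0 < c)
    (hs : 0 ≤ s.re) (ha : ‖a‖ ≤ C * (1 + t) ^ q) (hL : c * (1 + t) ^ m ≤ ‖Complex.exp L‖)
    (hB : |L.im| ≤ B) :
    ‖a * Complex.exp (-s * L)‖ ≤
      C * c ^ (-s.re) * Real.exp (|s.im| * B) * (1 + t) ^ (-(m * s.re - q)) := by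
  have hC : 0 ≤ C := nonneg_of_mul_nonneg_left ((norm_nonneg a).trans ha) (by positivity)
  have hexpL : ‖Complex.exp (-s * L)‖ = ‖Complex.exp L‖ ^ (-s.re) * Real.exp (s.im * L.im) := by
    rw [Complex.norm_exp, Complex.norm_exp, ← Real.exp_mul, ← Real.exp_add]
    simp only [neg_mul, Complex.neg_re, Complex.mul_re]
    ring_nf
  have hre : ‖Complex.exp L‖ ^ (-s.re) ≤ c ^ (-s.re) * (1 + t) ^ (-(m * s.re)) :=
    calc ‖Complex.exp L‖ ^ (-s.re) ≤ (c * (1 + t) ^ m) ^ (-s.re) :=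
          Real.rpow_le_rpow_of_nonpos (by positivity) hL (by linarith)
      _ = c ^ (-s.re) * (1 + t) ^ (-(m * s.re)) := by
          rw [Real.mul_rpow hc.le (by positivity), ← Real.rpow_natCast,
            ← Real.rpow_mul (by positivity), mul_neg]
  have him : Real.exp (s.im * L.im) ≤ Real.exp (|s.im| * B) := by
    refine Real.exp_le_exp.mpr ?_
    calc s.im * L.im ≤ |s.im| * |L.im| := by rw [← abs_mul]; exact le_abs_self _
      _ ≤ |s.im| * B := by gcongr
  rw [norm_mul, hexpL]
  calc ‖a‖ * (‖Complex.exp L‖ ^ (-s.re) * Real.exp (s.im * L.im))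
      ≤ C * (1 + t) ^ q * (c ^ (-s.re) * (1 + t) ^ (-(m * s.re)) * Real.exp (|s.im| * B)) := by
        gcongr
    _ = C * c ^ (-s.re) * Real.exp (|s.im| * B) * (1 + t) ^ (-(m * s.re - q)) := by
        rw [neg_sub, sub_eq_add_neg, Real.rpow_add (by positivity), Real.rpow_natCast]
        ring

/-- under Mahler's Hypothesis, the Dirichlet series
`ζ(s;f,g) = ∑_{k∈ℕ₀^p} g(k) f(k)^{-s}` converges absolutely for `Re s > (q+p)/m`. -/
theorem stmt9 (p : ℕ) (f g : MvPolynomial (Fin p) ℂ) (hf : MahlerHyp f)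
    (logf : (Fin p → ℝ) → ℂ) (hcont : ContinuousOn logf (Set.Ici 0))
    (hexp : ∀ x ∈ Set.Ici (0 : Fin p → ℝ),
      Complex.exp (logf x) = MvPolynomial.eval (fun i => (x i : ℂ)) f)
    (s : ℂ) (hs : ((g.totalDegree : ℝ) + p) / (f.totalDegree : ℝ) < s.re) :
    Summable (fun k : Fin p → ℕ =>
      ‖MvPolynomial.eval (fun i => ((k i : ℝ) : ℂ)) g
          * Complex.exp (-s * logf (fun i => (k i : ℝ)))‖) := by
  have hm : (0 : ℝ) < f.totalDegree := by exact_mod_cast hf.1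
  have hσ : 0 ≤ s.re := le_trans (by positivity) hs.le
  have hr : (p : ℝ) < f.totalDegree * s.re - g.totalDegree := by
    rw [div_lt_iff₀ hm] at hs
    linarith
  obtain ⟨c, hc, hlower⟩ := hf.exists_mul_one_add_norm_pow_le
  obtain ⟨B, hB⟩ := hf.exists_abs_im_le hcont hexp
  obtain ⟨C, -, hC⟩ := exists_norm_evalReal_le (le_refl g.totalDegree)
  refine .of_nonneg_of_le (fun _ => norm_nonneg _) (fun k => ?_)
    ((summable_one_add_norm_rpow_neg hr).mul_left (C * c ^ (-s.re) * Real.exp (|s.im| * B)))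
  have hk : (fun i => (k i : ℝ)) ∈ Set.Ici 0 := fun i => Nat.cast_nonneg _
  exact norm_mul_exp_neg_mul_le (norm_nonneg _) hc hσ (hC _)
    ((hexp _ hk).symm ▸ hlower _ hk) (hB _ hk)
end

section
/- The set of polynomials f in p variables of degree exactly m satisfying Mahler's Hypothesis is open in the complex vector space of polynomials of degree at most m in p variables (with the topology of coefficients). -/
open MvPolynomial

open Topology

/-- The polynomial with coefficient function `c` on exponent vectors bounded by `m`. -/
noncomputable def coeffToPoly (p m : ℕ) (c : (Fin p → Fin (m + 1)) → ℂ) :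
    MvPolynomial (Fin p) ℂ :=
  ∑ d : Fin p → Fin (m + 1), MvPolynomial.C (c d) * ∏ i : Fin p, (X i) ^ (d i : ℕ)

namespace Stmt10Aux

noncomputable def Fv (p m : ℕ) (c : (Fin p → Fin (m + 1)) → ℂ) (y : Fin p → ℂ) : ℂ :=
  ∑ d : Fin p → Fin (m + 1), c d * ∏ i : Fin p, y i ^ (d i : ℕ)

noncomputable def Hv (p m : ℕ) (c : (Fin p → Fin (m + 1)) → ℂ) (y : Fin p → ℂ) (t : ℂ) : ℂ :=
  ∑ d : Fin p → Fin (m + 1), c d * t ^ (m - ∑ i, (d i : ℕ)) * ∏ i : Fin p, y i ^ (d i : ℕ)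

noncomputable def topc (p m : ℕ) (c : (Fin p → Fin (m + 1)) → ℂ) :
    (Fin p → Fin (m + 1)) → ℂ :=
  fun d => if (∑ i, (d i : ℕ)) = m then c d else 0

variable {p m : ℕ}

lemma eval_coeffToPoly (c : (Fin p → Fin (m + 1)) → ℂ) (y : Fin p → ℂ) :
    eval y (coeffToPoly p m c) = Fv p m c y := by
  simp [coeffToPoly, Fv]

lemma homComp_coeffToPoly (c : (Fin p → Fin (m + 1)) → ℂ) :
    homogeneousComponent m (coeffToPoly p m c) = coeffToPoly p m (topc p m c) := by
  rw [coeffToPoly, map_sum, coeffToPoly]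
  refine Finset.sum_congr rfl fun d _ => ?_
  rw [homogeneousComponent_of_mem (by
    rw [mem_homogeneousSubmodule]
    exact (IsHomogeneous.prod Finset.univ _ (fun i => (d i : ℕ))
      (fun i _ => isHomogeneous_X_pow i (d i))).C_mul _)]
  by_cases h : (∑ i, (d i : ℕ)) = m
  · simp [topc, h]
  · rw [if_neg (fun hh : m = ∑ i, (d i : ℕ) => h hh.symm)]
    simp [topc, h]

lemma totalDegree_coeffToPoly_le (c : (Fin p → Fin (m + 1)) → ℂ)
    (hc : ∀ d : Fin p → Fin (m + 1), m < ∑ i, (d i : ℕ) → c d = 0) :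
    (coeffToPoly p m c).totalDegree ≤ m := by
  refine (totalDegree_finset_sum _ _).trans (Finset.sup_le fun d _ => ?_)
  by_cases h : m < ∑ i, (d i : ℕ)
  · simp [hc d h]
  · push_neg at h
    have h1 : ((MvPolynomial.C (c d) * ∏ i : Fin p, (X i) ^ ((d i : ℕ)) :
        MvPolynomial (Fin p) ℂ)).IsHomogeneous (∑ i, (d i : ℕ)) :=
      (IsHomogeneous.prod Finset.univ _ (fun i => (d i : ℕ))
        (fun i _ => isHomogeneous_X_pow i (d i))).C_mul _
    exact h1.totalDegree_le.trans h

lemma Hv_zero (c : (Fin p → Fin (m + 1)) → ℂ)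
    (hc : ∀ d : Fin p → Fin (m + 1), m < ∑ i, (d i : ℕ) → c d = 0) (y : Fin p → ℂ) :
    Hv p m c y 0 = Fv p m (topc p m c) y := by
  refine Finset.sum_congr rfl fun d _ => ?_
  rcases lt_trichotomy (∑ i, (d i : ℕ)) m with h | h | h
  · simp [topc, h.ne, zero_pow (Nat.sub_ne_zero_of_lt h)]
  · simp [topc, h, Nat.sub_eq_zero_of_le h.ge]
  · simp [topc, hc d h, h.ne']

lemma Hv_smul (c : (Fin p → Fin (m + 1)) → ℂ)
    (hc : ∀ d : Fin p → Fin (m + 1), m < ∑ i, (d i : ℕ) → c d = 0) (y : Fin p → ℂ) (t : ℂ) :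
    Hv p m c (t • y) t = t ^ m * Fv p m c y := by
  rw [Hv, Fv, Finset.mul_sum]
  refine Finset.sum_congr rfl fun d _ => ?_
  rcases le_or_gt (∑ i, (d i : ℕ)) m with h | h
  · simp only [Pi.smul_apply, smul_eq_mul, mul_pow]
    rw [Finset.prod_mul_distrib, Finset.prod_pow_eq_pow_sum]
    calc c d * t ^ (m - ∑ i, (d i : ℕ)) *
          (t ^ (∑ i, (d i : ℕ)) * ∏ i : Fin p, y i ^ (d i : ℕ))
        = c d * (t ^ (m - ∑ i, (d i : ℕ)) * t ^ (∑ i, (d i : ℕ))) *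
            ∏ i : Fin p, y i ^ (d i : ℕ) := by ring
      _ = t ^ m * (c d * ∏ i : Fin p, y i ^ (d i : ℕ)) := by
          rw [← pow_add, Nat.sub_add_cancel h]; ring
  · simp [hc d h]

lemma Hv_topc (c : (Fin p → Fin (m + 1)) → ℂ) (y : Fin p → ℂ) (t : ℂ) :
    Hv p m (topc p m c) y t = Fv p m (topc p m c) y := by
  refine Finset.sum_congr rfl fun d _ => ?_
  by_cases h : (∑ i, (d i : ℕ)) = m
  · simp [topc, h]
  · simp [topc, h]

lemma topc_constraint (c : (Fin p → Fin (m + 1)) → ℂ) :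
    ∀ d : Fin p → Fin (m + 1), m < ∑ i, (d i : ℕ) → topc p m c d = 0 :=
  fun d hd => by simp [topc, hd.ne']

lemma Fv_topc_smul (c : (Fin p → Fin (m + 1)) → ℂ) (s : ℂ) (y : Fin p → ℂ) :
    Fv p m (topc p m c) (s • y) = s ^ m * Fv p m (topc p m c) y := by
  rw [← Hv_topc (c := c) (t := s), Hv_smul _ (topc_constraint c) _ _]

lemma continuous_Hv {X : Type*} [TopologicalSpace X]
    (cf : X → ((Fin p → Fin (m + 1)) → ℂ)) (uf : X → (Fin p → ℝ)) (tf : X → ℝ)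
    (hcf : Continuous cf) (huf : Continuous uf) (htf : Continuous tf) :
    Continuous fun q => Hv p m (cf q) (fun i => ((uf q i : ℝ) : ℂ)) ((tf q : ℝ) : ℂ) := by
  refine continuous_finset_sum _ fun d _ => ?_
  exact (((continuous_apply d).comp hcf).mul
      ((Complex.continuous_ofReal.comp htf).pow _)).mul
    (continuous_finset_prod _ fun i _ =>
      (Complex.continuous_ofReal.comp ((continuous_apply i).comp huf)).pow _)

lemma continuous_Fv {X : Type*} [TopologicalSpace X]
    (cf : X → ((Fin p → Fin (m + 1)) → ℂ)) (uf : X → (Fin p → ℝ))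
    (hcf : Continuous cf) (huf : Continuous uf) :
    Continuous fun q => Fv p m (cf q) (fun i => ((uf q i : ℝ) : ℂ)) := by
  refine continuous_finset_sum _ fun d _ => ?_
  exact ((continuous_apply d).comp hcf).mul
    (continuous_finset_prod _ fun i _ =>
      (Complex.continuous_ofReal.comp ((continuous_apply i).comp huf)).pow _)

lemma totalDegree_coeffToPoly_eq (c : (Fin p → Fin (m + 1)) → ℂ)
    (hc : ∀ d : Fin p → Fin (m + 1), m < ∑ i, (d i : ℕ) → c d = 0)
    (y : Fin p → ℂ) (hy : Fv p m (topc p m c) y ≠ 0) :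
    (coeffToPoly p m c).totalDegree = m := by
  refine le_antisymm (totalDegree_coeffToPoly_le c hc) ?_
  by_contra h
  push_neg at h
  apply hy
  rw [← eval_coeffToPoly, ← homComp_coeffToPoly,
    show (homogeneousComponent m) (coeffToPoly p m c) = 0 from
      homogeneousComponent_eq_zero m (coeffToPoly p m c) h, map_zero]

end Stmt10Aux

/-- within the (coefficient) space of polynomials of total degree at most `m`
in `p` variables, the set of those of degree exactly `m` satisfying Mahler's Hypothesis is
open. -/
theorem stmt10 (p m : ℕ) :
    IsOpen {c : {c : (Fin p → Fin (m + 1)) → ℂ //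
          ∀ d : Fin p → Fin (m + 1), m < ∑ i, (d i : ℕ) → c d = 0} |
        (coeffToPoly p m c.1).totalDegree = m ∧ MahlerHyp (coeffToPoly p m c.1)} := by
  classical
  rw [isOpen_iff_mem_nhds]
  intro c₀ hc₀
  simp only [Set.mem_setOf_eq, MahlerHyp] at hc₀
  obtain ⟨hdeg, hm0, hpos, htop⟩ := hc₀
  have hm : 0 < m := hdeg ▸ hm0
  rcases Nat.eq_zero_or_pos p with rfl | hp
  · exfalso
    have h0 : (coeffToPoly 0 m c₀.1).totalDegree = 0 := by
      rw [coeffToPoly, Finset.univ_unique, Finset.sum_singleton]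
      simp
    rw [hdeg] at h0
    omega
  have hBc : IsCompact (Set.univ.pi fun _ : Fin p => Set.Icc (0:ℝ) 1) :=
    isCompact_univ_pi fun _ => isCompact_Icc
  set B := Set.univ.pi fun _ : Fin p => Set.Icc (0:ℝ) 1 with hBdef
  set K := B ∩ {u : Fin p → ℝ | ∑ i, u i = 1} with hKdef
  have hKc : IsCompact K :=
    hBc.inter_right (isClosed_eq (continuous_finset_sum _ fun i _ => continuous_apply i)
      continuous_const)
  -- first eventual statement : nonvanishing on the cube B
  have hev1 : ∀ᶠ c : {c : (Fin p → Fin (m + 1)) → ℂ //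
      ∀ d : Fin p → Fin (m + 1), m < ∑ i, (d i : ℕ) → c d = 0} in 𝓝 c₀,
      ∀ x ∈ B, Stmt10Aux.Fv p m c.1 (fun i => (x i : ℂ)) ≠ 0 := by
    refine hBc.eventually_forall_of_forall_eventually fun x hx => ?_
    have hcont : Continuous fun q : {c : (Fin p → Fin (m + 1)) → ℂ //
        ∀ d : Fin p → Fin (m + 1), m < ∑ i, (d i : ℕ) → c d = 0} × (Fin p → ℝ) =>
        Stmt10Aux.Fv p m q.1.1 (fun i => ((q.2 i : ℝ) : ℂ)) :=
      Stmt10Aux.continuous_Fv _ _ (continuous_subtype_val.comp continuous_fst) continuous_snd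
    have hne : Stmt10Aux.Fv p m c₀.1 (fun i => (x i : ℂ)) ≠ 0 := by
      rw [← Stmt10Aux.eval_coeffToPoly]
      exact hpos x (fun i => (hx i (Set.mem_univ i)).1)
    filter_upwards [(isOpen_ne.preimage hcont).eventually_mem hne] with z hz using hz
  -- second eventual statement : nonvanishing of Hv on K × [0,1]
  have hev2 : ∀ᶠ c : {c : (Fin p → Fin (m + 1)) → ℂ //
      ∀ d : Fin p → Fin (m + 1), m < ∑ i, (d i : ℕ) → c d = 0} in 𝓝 c₀,
      ∀ y ∈ K ×ˢ Set.Icc (0:ℝ) 1,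
        Stmt10Aux.Hv p m c.1 (fun i => (y.1 i : ℂ)) ((y.2 : ℝ) : ℂ) ≠ 0 := by
    refine (hKc.prod isCompact_Icc).eventually_forall_of_forall_eventually fun y hy => ?_
    have hcont : Continuous fun q : {c : (Fin p → Fin (m + 1)) → ℂ //
        ∀ d : Fin p → Fin (m + 1), m < ∑ i, (d i : ℕ) → c d = 0} × ((Fin p → ℝ) × ℝ) =>
        Stmt10Aux.Hv p m q.1.1 (fun i => ((q.2.1 i : ℝ) : ℂ)) ((q.2.2 : ℝ) : ℂ) :=
      Stmt10Aux.continuous_Hv _ _ _ (continuous_subtype_val.comp continuous_fst)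
        (continuous_fst.comp continuous_snd) (continuous_snd.comp continuous_snd)
    have hne : Stmt10Aux.Hv p m c₀.1 (fun i => (y.1 i : ℂ)) ((y.2 : ℝ) : ℂ) ≠ 0 := by
      obtain ⟨⟨hyB, hy1⟩, hyt⟩ := hy
      rcases eq_or_lt_of_le hyt.1 with ht0 | ht0
      · rw [← ht0, Complex.ofReal_zero, Stmt10Aux.Hv_zero _ c₀.2]
        have hxne : y.1 ≠ 0 := by
          intro h0
          rw [h0] at hy1
          simp at hy1
        have h := htop y.1 (fun i => (hyB i (Set.mem_univ i)).1) hxne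
        rwa [hdeg, Stmt10Aux.homComp_coeffToPoly, Stmt10Aux.eval_coeffToPoly] at h
      · have htne : y.2 ≠ 0 := ht0.ne'
        have htC : ((y.2 : ℝ) : ℂ) ≠ 0 := Complex.ofReal_ne_zero.2 htne
        have h1 : (fun i => ((y.1 i : ℝ) : ℂ)) =
            ((y.2 : ℝ) : ℂ) • fun i => ((y.2⁻¹ * y.1 i : ℝ) : ℂ) := by
          funext i
          simp only [Pi.smul_apply, smul_eq_mul]
          push_cast
          rw [← mul_assoc, mul_inv_cancel₀ htC, one_mul]
        rw [h1, Stmt10Aux.Hv_smul _ c₀.2]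
        refine mul_ne_zero (pow_ne_zero _ htC) ?_
        rw [← Stmt10Aux.eval_coeffToPoly]
        exact hpos _ (fun i => mul_nonneg (inv_nonneg.2 ht0.le) (hyB i (Set.mem_univ i)).1)
    filter_upwards [(isOpen_ne.preimage hcont).eventually_mem hne] with z hz using hz
  filter_upwards [hev1, hev2] with c h1 h2
  have hpne : (p:ℝ) ≠ 0 := Nat.cast_ne_zero.2 hp.ne'
  have hu₀ : (fun _ : Fin p => (p:ℝ)⁻¹) ∈ K := by
    refine Set.mem_inter (fun i _ => ⟨by positivity, ?_⟩) ?_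
    · exact inv_le_one_of_one_le₀ (by exact_mod_cast hp)
    · show (∑ _i : Fin p, (p:ℝ)⁻¹) = 1
      rw [Finset.sum_const, Finset.card_univ, Fintype.card_fin, nsmul_eq_mul,
        mul_inv_cancel₀ hpne]
  have hT0 : Stmt10Aux.Fv p m (Stmt10Aux.topc p m c.1)
      (fun _ : Fin p => (((p:ℝ)⁻¹ : ℝ) : ℂ)) ≠ 0 := by
    have h := h2 (fun _ : Fin p => (p:ℝ)⁻¹, 0) ⟨hu₀, ⟨le_refl 0, zero_le_one⟩⟩
    rwa [Complex.ofReal_zero, Stmt10Aux.Hv_zero _ c.2] at h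
  have hdeg' : (coeffToPoly p m c.1).totalDegree = m :=
    Stmt10Aux.totalDegree_coeffToPoly_eq _ c.2 _ hT0
  refine ⟨hdeg', ?_⟩
  unfold MahlerHyp
  refine ⟨by rw [hdeg']; exact hm, ?_, ?_⟩
  · -- nonvanishing on the whole orthant
    intro x hx
    rw [Stmt10Aux.eval_coeffToPoly]
    by_cases hs : ∑ i, x i ≤ 1
    · refine h1 x (fun i _ => ⟨hx i, ?_⟩)
      exact le_trans (Finset.single_le_sum (fun j _ => hx j) (Finset.mem_univ i)) hs
    · push_neg at hs
      set s := ∑ i, x i with hsdef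
      have hs0 : (0:ℝ) < s := lt_trans one_pos hs
      have hsne : s ≠ 0 := hs0.ne'
      have hxle : ∀ i, x i ≤ s := fun i =>
        Finset.single_le_sum (fun j _ => hx j) (Finset.mem_univ i)
      have huK : (fun i => s⁻¹ * x i) ∈ K := by
        refine Set.mem_inter (fun i _ => ⟨mul_nonneg (inv_nonneg.2 hs0.le) (hx i), ?_⟩) ?_
        · calc s⁻¹ * x i ≤ s⁻¹ * s :=
                mul_le_mul_of_nonneg_left (hxle i) (inv_nonneg.2 hs0.le)
            _ = 1 := inv_mul_cancel₀ hsne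
        · show (∑ i : Fin p, s⁻¹ * x i) = 1
          rw [← Finset.mul_sum, ← hsdef, inv_mul_cancel₀ hsne]
      have h := h2 (fun i => s⁻¹ * x i, s⁻¹)
        ⟨huK, ⟨inv_nonneg.2 hs0.le, inv_le_one_of_one_le₀ hs.le⟩⟩
      have hsC : ((s⁻¹ : ℝ) : ℂ) ≠ 0 :=
        Complex.ofReal_ne_zero.2 (inv_ne_zero hsne)
      have h1' : (fun i => ((s⁻¹ * x i : ℝ) : ℂ)) =
          ((s⁻¹ : ℝ) : ℂ) • fun i => ((x i : ℝ) : ℂ) := by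
        funext i
        simp only [Pi.smul_apply, smul_eq_mul]
        push_cast
        ring
      rw [h1', Stmt10Aux.Hv_smul _ c.2] at h
      exact fun h0 => h (by rw [h0, mul_zero])
  · -- nonvanishing of the top homogeneous part
    intro x hx hxne
    rw [hdeg', Stmt10Aux.homComp_coeffToPoly, Stmt10Aux.eval_coeffToPoly]
    obtain ⟨i₀, hi₀⟩ := Function.ne_iff.1 hxne
    have hs0 : (0:ℝ) < ∑ i, x i :=
      Finset.sum_pos' (fun j _ => hx j)
        ⟨i₀, Finset.mem_univ i₀, lt_of_le_of_ne (hx i₀) (Ne.symm hi₀)⟩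
    set s := ∑ i, x i with hsdef
    have hsne : s ≠ 0 := hs0.ne'
    have hxle : ∀ i, x i ≤ s := fun i =>
      Finset.single_le_sum (fun j _ => hx j) (Finset.mem_univ i)
    have huK : (fun i => s⁻¹ * x i) ∈ K := by
      refine Set.mem_inter (fun i _ => ⟨mul_nonneg (inv_nonneg.2 hs0.le) (hx i), ?_⟩) ?_
      · calc s⁻¹ * x i ≤ s⁻¹ * s :=
              mul_le_mul_of_nonneg_left (hxle i) (inv_nonneg.2 hs0.le)
          _ = 1 := inv_mul_cancel₀ hsne
      · show (∑ i : Fin p, s⁻¹ * x i) = 1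
        rw [← Finset.mul_sum, ← hsdef, inv_mul_cancel₀ hsne]
    have hTu := h2 (fun i => s⁻¹ * x i, 0) ⟨huK, ⟨le_refl 0, zero_le_one⟩⟩
    rw [Complex.ofReal_zero, Stmt10Aux.Hv_zero _ c.2] at hTu
    have hsC : ((s : ℝ) : ℂ) ≠ 0 := Complex.ofReal_ne_zero.2 hsne
    have hx' : (fun i => ((x i : ℝ) : ℂ)) =
        ((s : ℝ) : ℂ) • fun i => ((s⁻¹ * x i : ℝ) : ℂ) := by
      funext i
      simp only [Pi.smul_apply, smul_eq_mul]
      push_cast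
      rw [← mul_assoc, mul_inv_cancel₀ hsC, one_mul]
    rw [hx', Stmt10Aux.Fv_topc_smul]
    exact mul_ne_zero (pow_ne_zero _ hsC) hTu
end
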